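/- If l₁ ≤ d, 2d ≤ l₂ ≤ n − 2d, and l₁ + l₂ > n − 2d, then the two-contour system has a unique limit cycle, on which both clusters have average velocity v = n/(l₁ + l₂ + 2d). -/
import Mathlib


open scoped Classical

namespace TwoContour

/-- A state of the two-contour system: the cells of the front particles
of cluster 1 and cluster 2. -/
abbrev State (n : ℕ) := ZMod n × ZMod n

/-- Cell `c` is occupied by a cluster of length `l` whose front particle is at cell `α`:
the cluster occupies cells `α, α-1, …, α-(l-1)` (mod `n`). -/
def occ (n : ℕ) (α : ZMod n) (l : ℕ) (c : ZMod n) : Prop :=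
  ∃ k : ℕ, k < l ∧ c = α - (k : ZMod n)

/-- Cluster 1 is delayed: its front stands at node 1 (cell 0 of contour 1) while
cluster 2 occupies node 1 (cells `d`, `d+1` of contour 2) or stands at node 1
(competition at node 1 is resolved in favor of cluster 2); or its front stands at
node 2 (cell `d` of contour 1) while cluster 2 occupies node 2 (cells 0, 1 of contour 2). -/
def blocked1 (n l1 l2 d : ℕ) (s : State n) : Prop :=
  (s.1 = 0 ∧ ((occ n s.2 l2 (d : ZMod n) ∧ occ n s.2 l2 ((d : ZMod n) + 1)) ∨ s.2 = (d : ZMod n)))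
  ∨ (s.1 = (d : ZMod n) ∧ occ n s.2 l2 0 ∧ occ n s.2 l2 1)

/-- Cluster 2 is delayed: its front stands at node 2 (cell 0 of contour 2) while
cluster 1 occupies node 2 (cells `d`, `d+1` of contour 1) or stands at node 2
(competition at node 2 is resolved in favor of cluster 1); or its front stands at
node 1 (cell `d` of contour 2) while cluster 1 occupies node 1 (cells 0, 1 of contour 1). -/
def blocked2 (n l1 l2 d : ℕ) (s : State n) : Prop :=
  (s.2 = 0 ∧ ((occ n s.1 l1 (d : ZMod n) ∧ occ n s.1 l1 ((d : ZMod n) + 1)) ∨ s.1 = (d : ZMod n)))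
  ∨ (s.2 = (d : ZMod n) ∧ occ n s.1 l1 0 ∧ occ n s.1 l1 1)

/-- One time step of the deterministic dynamics: each non-delayed cluster advances one cell. -/
noncomputable def step (n l1 l2 d : ℕ) (s : State n) : State n :=
  (if blocked1 n l1 l2 d s then s.1 else s.1 + 1,
   if blocked2 n l1 l2 d s then s.2 else s.2 + 1)

/-- A state of free motion: from this state on, neither cluster is ever delayed. -/
def FreeState (n l1 l2 d : ℕ) (s : State n) : Prop :=
  ∀ t : ℕ, ¬ blocked1 n l1 l2 d ((step n l1 l2 d)^[t] s) ∧
           ¬ blocked2 n l1 l2 d ((step n l1 l2 d)^[t] s)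

/-- A state of collapse: from this state on, no particle of either cluster ever moves. -/
def CollapseState (n l1 l2 d : ℕ) (s : State n) : Prop :=
  ∀ t : ℕ, blocked1 n l1 l2 d ((step n l1 l2 d)^[t] s) ∧
           blocked2 n l1 l2 d ((step n l1 l2 d)^[t] s)

/-- `s` lies on a limit cycle of period `T`. -/
def Periodic (n l1 l2 d : ℕ) (s : State n) (T : ℕ) : Prop :=
  0 < T ∧ (step n l1 l2 d)^[T] s = s

/-- Number of moves of cluster 1 during the first `T` steps starting from `s`. -/
noncomputable def moves1 (n l1 l2 d : ℕ) (s : State n) (T : ℕ) : ℕ :=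
  ((Finset.range T).filter (fun t => ¬ blocked1 n l1 l2 d ((step n l1 l2 d)^[t] s))).card

/-- Number of moves of cluster 2 during the first `T` steps starting from `s`. -/
noncomputable def moves2 (n l1 l2 d : ℕ) (s : State n) (T : ℕ) : ℕ :=
  ((Finset.range T).filter (fun t => ¬ blocked2 n l1 l2 d ((step n l1 l2 d)^[t] s))).card

/-- An admissible state: the two clusters do not occupy the same node simultaneously. -/
def Admissible (n l1 l2 d : ℕ) (s : State n) : Prop :=
  ¬ (occ n s.1 l1 0 ∧ occ n s.1 l1 1 ∧
     occ n s.2 l2 (d : ZMod n) ∧ occ n s.2 l2 ((d : ZMod n) + 1)) ∧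
  ¬ (occ n s.1 l1 (d : ZMod n) ∧ occ n s.1 l1 ((d : ZMod n) + 1) ∧
     occ n s.2 l2 0 ∧ occ n s.2 l2 1)


structure Hyp (n l1 l2 d : ℕ) : Prop where
  hn : 0 < n
  hd : 0 < d
  h2d : 2*d ≤ n
  hl1pos : 0 < l1
  hl1n : l1 < n
  hl2pos : 0 < l2
  hl2n : l2 < n
  h12 : l1 ≤ l2
  h1 : l1 ≤ d
  h2 : 2*d ≤ l2
  h3 : l2 ≤ n - 2*d
  h4 : l1 + l2 > n - 2*d

variable {n l1 l2 d : ℕ}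

lemma cast_inj (hn : 0 < n) {a b : ℕ} (ha : a < n) (hb : b < n) :
    ((a : ZMod n) = (b : ZMod n)) ↔ a = b := by
  haveI : NeZero n := ⟨hn.ne'⟩
  constructor
  · intro h
    have := congrArg ZMod.val h
    rwa [ZMod.val_cast_of_lt ha, ZMod.val_cast_of_lt hb] at this
  · intro h; rw [h]

lemma val_sub_cast (hn : 0 < n) {a b : ℕ} (ha : a < n) (hb : b < n) :
    ((a : ZMod n) - (b : ZMod n)).val = if b ≤ a then a - b else n + a - b := by
  haveI : NeZero n := ⟨hn.ne'⟩
  split_ifs with h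
  · rw [← Nat.cast_sub h, ZMod.val_cast_of_lt (by omega)]
  · have : (a : ZMod n) - b = ((n + a - b : ℕ) : ZMod n) := by
      have hb' : b ≤ n + a := by omega
      rw [Nat.cast_sub hb', Nat.cast_add, ZMod.natCast_self, zero_add]
    rw [this, ZMod.val_cast_of_lt (by omega)]

lemma occ_iff (hn : 0 < n) {l : ℕ} (hl : l ≤ n) (α c : ZMod n) :
    occ n α l c ↔ (α - c).val < l := by
  haveI : NeZero n := ⟨hn.ne'⟩
  constructor
  · rintro ⟨k, hk, rfl⟩
    rw [sub_sub_cancel, ZMod.val_cast_of_lt (by omega)]; exact hk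
  · intro h
    exact ⟨(α - c).val, h, by rw [ZMod.natCast_zmod_val, sub_sub_cancel]⟩

lemma occ_cast_iff (hn : 0 < n) {l : ℕ} (hl : l ≤ n) {b c : ℕ} (hb : b < n) (hc : c < n) :
    occ n (b : ZMod n) l (c : ZMod n) ↔ ((c ≤ b ∧ b - c < l) ∨ (b < c ∧ n + b - c < l)) := by
  rw [occ_iff hn hl, val_sub_cast hn hb hc]
  split_ifs with h <;> omega

lemma blocked1_iff (H : Hyp n l1 l2 d) {a b : ℕ} (ha : a < n) (hb : b < n) :
    blocked1 n l1 l2 d ((a : ZMod n), (b : ZMod n)) ↔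
      ((a = 0 ∧ d ≤ b ∧ b - d < l2) ∨ (a = 0 ∧ b < d ∧ n + b - d < l2)
        ∨ (a = d ∧ 1 ≤ b ∧ b < l2)) := by
  obtain ⟨hn, hd, h2d, _, hl1n, hl2pos, hl2n, h12, h1, h2, h3, h4⟩ := H
  have hn4 : 4*d ≤ n := by omega
  have hc1 : ((d : ZMod n) + 1) = ((d+1 : ℕ) : ZMod n) := by push_cast; ring
  have hc0 : (0 : ZMod n) = ((0 : ℕ) : ZMod n) := by norm_cast
  have hc01 : (1 : ZMod n) = ((1 : ℕ) : ZMod n) := by norm_cast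
  rw [blocked1]
  simp only [hc1]
  rw [show (0 : ZMod n) = ((0:ℕ) : ZMod n) from hc0, show (1 : ZMod n) = ((1:ℕ) : ZMod n) from hc01]
  rw [occ_cast_iff hn (by omega) hb (by omega : d < n),
      occ_cast_iff hn (by omega) hb (by omega : d + 1 < n),
      occ_cast_iff hn (by omega) hb (by omega : (0:ℕ) < n),
      occ_cast_iff hn (by omega) hb (by omega : (1:ℕ) < n),
      cast_inj hn ha (by omega : (0:ℕ) < n), cast_inj hn hb (by omega : d < n),
      cast_inj hn ha (by omega : d < n)]
  omega

lemma blocked2_iff (H : Hyp n l1 l2 d) {a b : ℕ} (ha : a < n) (hb : b < n) :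
    blocked2 n l1 l2 d ((a : ZMod n), (b : ZMod n)) ↔
      ((b = 0 ∧ d ≤ a ∧ a - d < l1) ∨ (b = 0 ∧ a < d ∧ n + a - d < l1)
        ∨ (b = d ∧ 1 ≤ a ∧ a < l1)) := by
  obtain ⟨hn, hd, h2d, hl1pos, hl1n, _, hl2n, h12, h1, h2, h3, h4⟩ := H
  have hn4 : 4*d ≤ n := by omega
  have hc1 : ((d : ZMod n) + 1) = ((d+1 : ℕ) : ZMod n) := by push_cast; ring
  have hc0 : (0 : ZMod n) = ((0 : ℕ) : ZMod n) := by norm_cast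
  have hc01 : (1 : ZMod n) = ((1 : ℕ) : ZMod n) := by norm_cast
  rw [blocked2]
  simp only [hc1]
  rw [show (0 : ZMod n) = ((0:ℕ) : ZMod n) from hc0, show (1 : ZMod n) = ((1:ℕ) : ZMod n) from hc01]
  rw [occ_cast_iff hn (by omega) ha (by omega : d < n),
      occ_cast_iff hn (by omega) ha (by omega : d + 1 < n),
      occ_cast_iff hn (by omega) ha (by omega : (0:ℕ) < n),
      occ_cast_iff hn (by omega) ha (by omega : (1:ℕ) < n),
      cast_inj hn hb (by omega : (0:ℕ) < n), cast_inj hn ha (by omega : d < n),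
      cast_inj hn hb (by omega : d < n)]
  omega

variable {n l1 l2 d : ℕ}


lemma step_ff {s : State n} (H1 : ¬ blocked1 n l1 l2 d s) (H2 : ¬ blocked2 n l1 l2 d s) :
    step n l1 l2 d s = (s.1 + 1, s.2 + 1) := by
  rw [step, if_neg H1, if_neg H2]

lemma step_fb {s : State n} (H1 : ¬ blocked1 n l1 l2 d s) (H2 : blocked2 n l1 l2 d s) :
    step n l1 l2 d s = (s.1 + 1, s.2) := by
  rw [step, if_neg H1, if_pos H2]

lemma step_bf {s : State n} (H1 : blocked1 n l1 l2 d s) (H2 : ¬ blocked2 n l1 l2 d s) :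
    step n l1 l2 d s = (s.1, s.2 + 1) := by
  rw [step, if_pos H1, if_neg H2]

lemma run_free (a0 b0 m : ℕ)
    (h : ∀ j, j < m → ¬ blocked1 n l1 l2 d (((a0+j : ℕ) : ZMod n), ((b0+j : ℕ) : ZMod n)) ∧
                      ¬ blocked2 n l1 l2 d (((a0+j : ℕ) : ZMod n), ((b0+j : ℕ) : ZMod n))) :
    ∀ j, j ≤ m → (step n l1 l2 d)^[j] ((a0 : ZMod n), (b0 : ZMod n))
        = (((a0+j : ℕ) : ZMod n), ((b0+j : ℕ) : ZMod n)) := by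
  intro j hj
  induction j with
  | zero => simp
  | succ k ih =>
    rw [Function.iterate_succ_apply', ih (by omega), step_ff (h k (by omega)).1 (h k (by omega)).2]
    simp only [Prod.mk.injEq]
    constructor <;> push_cast <;> ring

lemma run_b1 (a0 b0 m : ℕ)
    (h : ∀ j, j < m → blocked1 n l1 l2 d ((a0 : ZMod n), ((b0+j : ℕ) : ZMod n)) ∧
                      ¬ blocked2 n l1 l2 d ((a0 : ZMod n), ((b0+j : ℕ) : ZMod n))) :
    ∀ j, j ≤ m → (step n l1 l2 d)^[j] ((a0 : ZMod n), (b0 : ZMod n))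
        = ((a0 : ZMod n), ((b0+j : ℕ) : ZMod n)) := by
  intro j hj
  induction j with
  | zero => simp
  | succ k ih =>
    rw [Function.iterate_succ_apply', ih (by omega), step_bf (h k (by omega)).1 (h k (by omega)).2]
    simp only [Prod.mk.injEq]
    exact ⟨trivial, by push_cast; ring⟩

lemma run_b2 (a0 b0 m : ℕ)
    (h : ∀ j, j < m → ¬ blocked1 n l1 l2 d (((a0+j : ℕ) : ZMod n), (b0 : ZMod n)) ∧
                      blocked2 n l1 l2 d (((a0+j : ℕ) : ZMod n), (b0 : ZMod n))) :
    ∀ j, j ≤ m → (step n l1 l2 d)^[j] ((a0 : ZMod n), (b0 : ZMod n))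
        = (((a0+j : ℕ) : ZMod n), (b0 : ZMod n)) := by
  intro j hj
  induction j with
  | zero => simp
  | succ k ih =>
    rw [Function.iterate_succ_apply', ih (by omega), step_fb (h k (by omega)).1 (h k (by omega)).2]
    simp only [Prod.mk.injEq]
    exact ⟨by push_cast; ring, trivial⟩

def c0 (n l1 d : ℕ) : State n := (((d+l1 : ℕ) : ZMod n), ((0:ℕ) : ZMod n))

lemma cast_n_zero (hn : 0 < n) : ((n : ℕ) : ZMod n) = ((0:ℕ) : ZMod n) := by
  simp

/-- Phase A: free run from `c0`. -/
lemma L1 (H : Hyp n l1 l2 d) : ∀ t, t ≤ n-(l1+d) →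
    (step n l1 l2 d)^[t] (c0 n l1 d) = (((d+l1+t : ℕ) : ZMod n), ((t:ℕ) : ZMod n)) := by
  have hh := H; obtain ⟨hn, hd, h2d, hl1pos, hl1n, hl2pos, hl2n, h12, h1, h2, h3, h4⟩ := hh
  intro t ht
  have h := run_free (n := n) (l1 := l1) (l2 := l2) (d := d) (d+l1) 0 (n-(l1+d)) ?_ t ht
  · rw [show (0+t) = t from Nat.zero_add t] at h
    exact h
  · intro j hj
    constructor
    · rw [blocked1_iff H (by omega) (by omega)]; omega
    · rw [blocked2_iff H (by omega) (by omega)]; omega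

lemma L1e (H : Hyp n l1 l2 d) :
    (step n l1 l2 d)^[n-(l1+d)] (c0 n l1 d) = (((0:ℕ) : ZMod n), ((n-(l1+d) : ℕ) : ZMod n)) := by
  have hh := H; obtain ⟨hn, hd, h2d, hl1pos, hl1n, hl2pos, hl2n, h12, h1, h2, h3, h4⟩ := hh
  have h := L1 H (n-(l1+d)) le_rfl
  rwa [show d+l1+(n-(l1+d)) = n by omega, cast_n_zero hn] at h

/-- Phase B: cluster 1 blocked at node 1, cluster 2 runs. -/
lemma L2 (H : Hyp n l1 l2 d) {b0 : ℕ} (hb1 : d ≤ b0) (hb2 : b0 < d+l2) : ∀ j, j ≤ d+l2-b0 →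
    (step n l1 l2 d)^[j] (((0:ℕ) : ZMod n), (b0 : ZMod n)) = (((0:ℕ) : ZMod n), ((b0+j : ℕ) : ZMod n)) := by
  have hh := H; obtain ⟨hn, hd, h2d, hl1pos, hl1n, hl2pos, hl2n, h12, h1, h2, h3, h4⟩ := hh
  intro j hj
  refine run_b1 0 b0 (d+l2-b0) ?_ j hj
  intro j hj
  constructor
  · rw [blocked1_iff H (by omega) (by omega)]; omega
  · rw [blocked2_iff H (by omega) (by omega)]; omega

lemma L2e (H : Hyp n l1 l2 d) {b0 : ℕ} (hb1 : d ≤ b0) (hb2 : b0 < d+l2) :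
    (step n l1 l2 d)^[d+l2-b0] (((0:ℕ) : ZMod n), (b0 : ZMod n)) = (((0:ℕ) : ZMod n), ((d+l2 : ℕ) : ZMod n)) := by
  have h := L2 H hb1 hb2 (d+l2-b0) le_rfl
  rwa [show b0+(d+l2-b0) = d+l2 by omega] at h

/-- Phase C: free run. -/
lemma L3 (H : Hyp n l1 l2 d) : ∀ j, j ≤ n-(d+l2) →
    (step n l1 l2 d)^[j] (((0:ℕ) : ZMod n), ((d+l2 : ℕ) : ZMod n)) = (((j:ℕ) : ZMod n), ((d+l2+j : ℕ) : ZMod n)) := by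
  have hh := H; obtain ⟨hn, hd, h2d, hl1pos, hl1n, hl2pos, hl2n, h12, h1, h2, h3, h4⟩ := hh
  intro t ht
  have h := run_free (n := n) (l1 := l1) (l2 := l2) (d := d) 0 (d+l2) (n-(d+l2)) ?_ t ht
  · rw [show (0+t) = t from Nat.zero_add t] at h
    exact h
  · intro j hj
    constructor
    · rw [blocked1_iff H (by omega) (by omega)]; omega
    · rw [blocked2_iff H (by omega) (by omega)]; omega

lemma L3e (H : Hyp n l1 l2 d) :
    (step n l1 l2 d)^[n-(d+l2)] (((0:ℕ) : ZMod n), ((d+l2 : ℕ) : ZMod n)) = (((n-(d+l2) : ℕ) : ZMod n), ((0:ℕ) : ZMod n)) := by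
  have hh := H; obtain ⟨hn, hd, h2d, hl1pos, hl1n, hl2pos, hl2n, h12, h1, h2, h3, h4⟩ := hh
  have h := L3 H (n-(d+l2)) le_rfl
  rwa [show d+l2+(n-(d+l2)) = n by omega, cast_n_zero hn] at h

/-- Phase D: cluster 2 blocked at node 2, cluster 1 runs. -/
lemma L4 (H : Hyp n l1 l2 d) {a0 : ℕ} (ha1 : d ≤ a0) (ha2 : a0 < d+l1) : ∀ j, j ≤ d+l1-a0 →
    (step n l1 l2 d)^[j] ((a0 : ZMod n), ((0:ℕ) : ZMod n)) = (((a0+j : ℕ) : ZMod n), ((0:ℕ) : ZMod n)) := by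
  have hh := H; obtain ⟨hn, hd, h2d, hl1pos, hl1n, hl2pos, hl2n, h12, h1, h2, h3, h4⟩ := hh
  intro j hj
  refine run_b2 a0 0 (d+l1-a0) ?_ j hj
  intro j hj
  constructor
  · rw [blocked1_iff H (by omega) (by omega)]; omega
  · rw [blocked2_iff H (by omega) (by omega)]; omega

lemma L4e (H : Hyp n l1 l2 d) {a0 : ℕ} (ha1 : d ≤ a0) (ha2 : a0 < d+l1) :
    (step n l1 l2 d)^[d+l1-a0] ((a0 : ZMod n), ((0:ℕ) : ZMod n)) = c0 n l1 d := by
  have h := L4 H ha1 ha2 (d+l1-a0) le_rfl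
  rwa [show a0+(d+l1-a0) = d+l1 by omega] at h

/-- cluster 1 blocked at node 2, cluster 2 runs. -/
lemma L5e (H : Hyp n l1 l2 d) {b0 : ℕ} (hb1 : 1 ≤ b0) (hb2 : b0 < l2) :
    (step n l1 l2 d)^[l2-b0] ((d : ZMod n), (b0 : ZMod n)) = ((d : ZMod n), ((l2 : ℕ) : ZMod n)) := by
  have hh := H; obtain ⟨hn, hd, h2d, hl1pos, hl1n, hl2pos, hl2n, h12, h1, h2, h3, h4⟩ := hh
  have h := run_b1 (n := n) (l1 := l1) (l2 := l2) (d := d) d b0 (l2-b0) ?_ (l2-b0) le_rfl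
  · rwa [show b0+(l2-b0) = l2 by omega] at h
  · intro j hj
    constructor
    · rw [blocked1_iff H (by omega) (by omega)]; omega
    · rw [blocked2_iff H (by omega) (by omega)]; omega

lemma L6e (H : Hyp n l1 l2 d) :
    (step n l1 l2 d)^[n-l2] ((d : ZMod n), ((l2 : ℕ) : ZMod n)) = (((d+(n-l2) : ℕ) : ZMod n), ((0:ℕ) : ZMod n)) := by
  have hh := H; obtain ⟨hn, hd, h2d, hl1pos, hl1n, hl2pos, hl2n, h12, h1, h2, h3, h4⟩ := hh
  have h := run_free (n := n) (l1 := l1) (l2 := l2) (d := d) d l2 (n-l2) ?_ (n-l2) le_rfl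
  · rwa [show l2+(n-l2) = n by omega, cast_n_zero hn] at h
  · intro j hj
    constructor
    · rw [blocked1_iff H (by omega) (by omega)]; omega
    · rw [blocked2_iff H (by omega) (by omega)]; omega

lemma L7e (H : Hyp n l1 l2 d) :
    (step n l1 l2 d)^[l2-d] (((d+(n-l2) : ℕ) : ZMod n), ((0:ℕ) : ZMod n)) = (((0:ℕ) : ZMod n), ((l2-d : ℕ) : ZMod n)) := by
  have hh := H; obtain ⟨hn, hd, h2d, hl1pos, hl1n, hl2pos, hl2n, h12, h1, h2, h3, h4⟩ := hh
  have h := run_free (n := n) (l1 := l1) (l2 := l2) (d := d) (d+(n-l2)) 0 (l2-d) ?_ (l2-d) le_rfl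
  · rw [show d+(n-l2)+(l2-d) = n by omega, cast_n_zero hn, show (0+(l2-d)) = l2-d from Nat.zero_add _] at h
    exact h
  · intro j hj
    constructor
    · rw [blocked1_iff H (by omega) (by omega)]; omega
    · rw [blocked2_iff H (by omega) (by omega)]; omega

/-- cluster 2 blocked at node 1, cluster 1 runs. -/
lemma L8e (H : Hyp n l1 l2 d) {a0 : ℕ} (ha1 : 1 ≤ a0) (ha2 : a0 < l1) :
    (step n l1 l2 d)^[l1-a0] ((a0 : ZMod n), (d : ZMod n)) = (((l1 : ℕ) : ZMod n), (d : ZMod n)) := by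
  have hh := H; obtain ⟨hn, hd, h2d, hl1pos, hl1n, hl2pos, hl2n, h12, h1, h2, h3, h4⟩ := hh
  have h := run_b2 (n := n) (l1 := l1) (l2 := l2) (d := d) a0 d (l1-a0) ?_ (l1-a0) le_rfl
  · rwa [show a0+(l1-a0) = l1 by omega] at h
  · intro j hj
    constructor
    · rw [blocked1_iff H (by omega) (by omega)]; omega
    · rw [blocked2_iff H (by omega) (by omega)]; omega

lemma L9e (H : Hyp n l1 l2 d) :
    (step n l1 l2 d)^[d-l1] (((l1 : ℕ) : ZMod n), (d : ZMod n)) = ((d : ZMod n), ((d+(d-l1) : ℕ) : ZMod n)) := by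
  have hh := H; obtain ⟨hn, hd, h2d, hl1pos, hl1n, hl2pos, hl2n, h12, h1, h2, h3, h4⟩ := hh
  have h := run_free (n := n) (l1 := l1) (l2 := l2) (d := d) l1 d (d-l1) ?_ (d-l1) le_rfl
  · rwa [show l1+(d-l1) = d by omega] at h
  · intro j hj
    constructor
    · rw [blocked1_iff H (by omega) (by omega)]; omega
    · rw [blocked2_iff H (by omega) (by omega)]; omega

def Reaches (n l1 l2 d : ℕ) (s s' : State n) : Prop := ∃ t, (step n l1 l2 d)^[t] s = s'

lemma reaches_trans {s s' s'' : State n} (h : Reaches n l1 l2 d s s') (h' : Reaches n l1 l2 d s' s'') :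
    Reaches n l1 l2 d s s'' := by
  obtain ⟨t, ht⟩ := h; obtain ⟨u, hu⟩ := h'
  exact ⟨u + t, by rw [Function.iterate_add_apply, ht, hu]⟩

lemma reach1a (H : Hyp n l1 l2 d) {b0 : ℕ} (hb1 : d ≤ b0) (hb2 : b0 < d+l2) :
    Reaches n l1 l2 d (((0:ℕ) : ZMod n), (b0 : ZMod n)) (c0 n l1 d) := by
  have hh := H; obtain ⟨hn, hd, h2d, hl1pos, hl1n, hl2pos, hl2n, h12, h1, h2, h3, h4⟩ := hh
  refine reaches_trans ⟨_, L2e H hb1 hb2⟩ (reaches_trans ⟨_, L3e H⟩ ⟨_, L4e H (by omega) (by omega)⟩)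

lemma reach1b (H : Hyp n l1 l2 d) {b0 : ℕ} (hb1 : 1 ≤ b0) (hb2 : b0 < l2) :
    Reaches n l1 l2 d ((d : ZMod n), (b0 : ZMod n)) (c0 n l1 d) := by
  have hh := H; obtain ⟨hn, hd, h2d, hl1pos, hl1n, hl2pos, hl2n, h12, h1, h2, h3, h4⟩ := hh
  refine reaches_trans ⟨_, L5e H hb1 hb2⟩ (reaches_trans ⟨_, L6e H⟩
    (reaches_trans ⟨_, L7e H⟩ (reach1a H (by omega) (by omega))))

lemma reach2a (H : Hyp n l1 l2 d) {a0 : ℕ} (ha1 : d ≤ a0) (ha2 : a0 < d+l1) :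
    Reaches n l1 l2 d ((a0 : ZMod n), ((0:ℕ) : ZMod n)) (c0 n l1 d) :=
  ⟨_, L4e H ha1 ha2⟩

lemma reach2b (H : Hyp n l1 l2 d) {a0 : ℕ} (ha1 : 1 ≤ a0) (ha2 : a0 < l1) :
    Reaches n l1 l2 d ((a0 : ZMod n), (d : ZMod n)) (c0 n l1 d) := by
  have hh := H; obtain ⟨hn, hd, h2d, hl1pos, hl1n, hl2pos, hl2n, h12, h1, h2, h3, h4⟩ := hh
  refine reaches_trans ⟨_, L8e H ha1 ha2⟩ (reaches_trans ⟨_, L9e H⟩ (reach1b H (by omega) (by omega)))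

lemma cycB (H : Hyp n l1 l2 d) : ∀ j, j ≤ l1+l2+2*d-n →
    (step n l1 l2 d)^[j + (n-(l1+d))] (c0 n l1 d)
      = (((0:ℕ) : ZMod n), ((n-(l1+d)+j : ℕ) : ZMod n)) := by
  have hh := H; obtain ⟨hn, hd, h2d, hl1pos, hl1n, hl2pos, hl2n, h12, h1, h2, h3, h4⟩ := hh
  intro j hj
  rw [Function.iterate_add_apply, L1e H]
  exact L2 H (by omega) (by omega) j (by omega)

lemma cycBe (H : Hyp n l1 l2 d) :
    (step n l1 l2 d)^[(l1+l2+2*d-n) + (n-(l1+d))] (c0 n l1 d)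
      = (((0:ℕ) : ZMod n), ((d+l2 : ℕ) : ZMod n)) := by
  have hh := H; obtain ⟨hn, hd, h2d, hl1pos, hl1n, hl2pos, hl2n, h12, h1, h2, h3, h4⟩ := hh
  have h := cycB H (l1+l2+2*d-n) le_rfl
  rwa [show n-(l1+d)+(l1+l2+2*d-n) = d+l2 by omega] at h

lemma cycC (H : Hyp n l1 l2 d) : ∀ j, j ≤ n-(d+l2) →
    (step n l1 l2 d)^[j + ((l1+l2+2*d-n) + (n-(l1+d)))] (c0 n l1 d)
      = (((j:ℕ) : ZMod n), ((d+l2+j : ℕ) : ZMod n)) := by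
  intro j hj
  rw [Function.iterate_add_apply, cycBe H]
  exact L3 H j hj

lemma cycCe (H : Hyp n l1 l2 d) :
    (step n l1 l2 d)^[(n-(d+l2)) + ((l1+l2+2*d-n) + (n-(l1+d)))] (c0 n l1 d)
      = (((n-(d+l2) : ℕ) : ZMod n), ((0:ℕ) : ZMod n)) := by
  rw [Function.iterate_add_apply, cycBe H]
  exact L3e H

lemma cycD (H : Hyp n l1 l2 d) : ∀ j, j ≤ l1+l2+2*d-n →
    (step n l1 l2 d)^[j + ((n-(d+l2)) + ((l1+l2+2*d-n) + (n-(l1+d))))] (c0 n l1 d)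
      = (((n-(d+l2)+j : ℕ) : ZMod n), ((0:ℕ) : ZMod n)) := by
  have hh := H; obtain ⟨hn, hd, h2d, hl1pos, hl1n, hl2pos, hl2n, h12, h1, h2, h3, h4⟩ := hh
  intro j hj
  rw [Function.iterate_add_apply, cycCe H]
  exact L4 H (by omega) (by omega) j (by omega)

lemma cycle_T0 (H : Hyp n l1 l2 d) :
    (step n l1 l2 d)^[l1+l2+2*d] (c0 n l1 d) = c0 n l1 d := by
  have hh := H; obtain ⟨hn, hd, h2d, hl1pos, hl1n, hl2pos, hl2n, h12, h1, h2, h3, h4⟩ := hh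
  have h := cycD H (l1+l2+2*d-n) le_rfl
  rwa [show (l1+l2+2*d-n) + ((n-(d+l2)) + ((l1+l2+2*d-n) + (n-(l1+d)))) = l1+l2+2*d by omega,
       show n-(d+l2)+(l1+l2+2*d-n) = d+l1 by omega] at h

/-- The blocked pattern along the limit cycle. -/
lemma pattern (H : Hyp n l1 l2 d) : ∀ t, t < l1+l2+2*d →
    ((blocked1 n l1 l2 d ((step n l1 l2 d)^[t] (c0 n l1 d)) ↔
        (n-(l1+d) ≤ t ∧ t < (n-(l1+d)) + (l1+l2+2*d-n))) ∧
     (blocked2 n l1 l2 d ((step n l1 l2 d)^[t] (c0 n l1 d)) ↔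
        ((n-(l1+d)) + (l1+l2+2*d-n) + (n-(d+l2)) ≤ t))) := by
  have hh := H; obtain ⟨hn, hd, h2d, hl1pos, hl1n, hl2pos, hl2n, h12, h1, h2, h3, h4⟩ := hh
  intro t ht
  rcases lt_or_ge t (n-(l1+d)) with hw | hw
  · rw [L1 H t (by omega), blocked1_iff H (by omega) (by omega),
        blocked2_iff H (by omega) (by omega)]
    omega
  · rcases lt_or_ge t ((n-(l1+d)) + (l1+l2+2*d-n)) with hw2 | hw2
    · rw [show t = (t - (n-(l1+d))) + (n-(l1+d)) by omega, cycB H _ (by omega),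
          blocked1_iff H (by omega) (by omega), blocked2_iff H (by omega) (by omega)]
      omega
    · rcases lt_or_ge t ((n-(l1+d)) + (l1+l2+2*d-n) + (n-(d+l2))) with hw3 | hw3
      · rw [show t = (t - ((n-(l1+d)) + (l1+l2+2*d-n))) + ((l1+l2+2*d-n) + (n-(l1+d))) by omega,
            cycC H _ (by omega), blocked1_iff H (by omega) (by omega),
            blocked2_iff H (by omega) (by omega)]
        omega
      · rw [show t = (t - ((n-(l1+d)) + (l1+l2+2*d-n) + (n-(d+l2))))
              + ((n-(d+l2)) + ((l1+l2+2*d-n) + (n-(l1+d)))) by omega,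
            cycD H _ (by omega), blocked1_iff H (by omega) (by omega),
            blocked2_iff H (by omega) (by omega)]
        omega

/-- `T0` is the minimal period of `c0`. -/
lemma min_per (H : Hyp n l1 l2 d) : ∀ r, 0 < r → r < l1+l2+2*d →
    (step n l1 l2 d)^[r] (c0 n l1 d) ≠ c0 n l1 d := by
  have hh := H; obtain ⟨hn, hd, h2d, hl1pos, hl1n, hl2pos, hl2n, h12, h1, h2, h3, h4⟩ := hh
  intro r hr0 hr heq
  rcases lt_or_ge r (n-(l1+d)) with hw | hw
  · rw [L1 H r (by omega)] at heq
    have h2' := congrArg Prod.snd heq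
    simp only [c0] at h2'
    rw [cast_inj hn (by omega) (by omega)] at h2'
    omega
  · rcases lt_or_ge r ((n-(l1+d)) + (l1+l2+2*d-n)) with hw2 | hw2
    · rw [show r = (r - (n-(l1+d))) + (n-(l1+d)) by omega, cycB H _ (by omega)] at heq
      have h1' := congrArg Prod.fst heq
      simp only [c0] at h1'
      rw [cast_inj hn (by omega) (by omega)] at h1'
      omega
    · rcases lt_or_ge r ((n-(l1+d)) + (l1+l2+2*d-n) + (n-(d+l2))) with hw3 | hw3
      · rw [show r = (r - ((n-(l1+d)) + (l1+l2+2*d-n))) + ((l1+l2+2*d-n) + (n-(l1+d))) by omega,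
            cycC H _ (by omega)] at heq
        have h2' := congrArg Prod.snd heq
        simp only [c0] at h2'
        rw [cast_inj hn (by omega) (by omega)] at h2'
        omega
      · rw [show r = (r - ((n-(l1+d)) + (l1+l2+2*d-n) + (n-(d+l2))))
              + ((n-(d+l2)) + ((l1+l2+2*d-n) + (n-(l1+d)))) by omega,
            cycD H _ (by omega)] at heq
        have h1' := congrArg Prod.fst heq
        simp only [c0] at h1'
        rw [cast_inj hn (by omega) (by omega)] at h1'
        omega

lemma blocked_reach (H : Hyp n l1 l2 d) (s : State n)
    (hb : blocked1 n l1 l2 d s ∨ blocked2 n l1 l2 d s) :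
    Reaches n l1 l2 d s (c0 n l1 d) := by
  have hh := H; obtain ⟨hn, hd, h2d, hl1pos, hl1n, hl2pos, hl2n, h12, h1, h2, h3, h4⟩ := hh
  haveI : NeZero n := ⟨hn.ne'⟩
  have hs : s = (((s.1.val : ℕ) : ZMod n), ((s.2.val : ℕ) : ZMod n)) := by
    rw [ZMod.natCast_zmod_val, ZMod.natCast_zmod_val]
  rw [hs] at hb ⊢
  rw [blocked1_iff H (ZMod.val_lt s.1) (ZMod.val_lt s.2),
      blocked2_iff H (ZMod.val_lt s.1) (ZMod.val_lt s.2)] at hb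
  rcases hb with (⟨ha, hb1, hb2⟩ | ⟨ha, hb1, hb2⟩ | ⟨ha, hb1, hb2⟩) |
    (⟨ha, hb1, hb2⟩ | ⟨ha, hb1, hb2⟩ | ⟨ha, hb1, hb2⟩)
  · rw [ha]; exact reach1a H (by omega) (by omega)
  · exact absurd hb2 (by omega)
  · rw [ha]; exact reach1b H (by omega) (by omega)
  · rw [ha]; exact reach2a H (by omega) (by omega)
  · exact absurd hb2 (by omega)
  · rw [ha]; exact reach2b H (by omega) (by omega)

lemma reach_c0 (H : Hyp n l1 l2 d) (s : State n) : Reaches n l1 l2 d s (c0 n l1 d) := by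
  have hh := H; obtain ⟨hn, hd, h2d, hl1pos, hl1n, hl2pos, hl2n, h12, h1, h2, h3, h4⟩ := hh
  haveI : NeZero n := ⟨hn.ne'⟩
  by_cases hbl : ∃ t, blocked1 n l1 l2 d ((step n l1 l2 d)^[t] s) ∨
      blocked2 n l1 l2 d ((step n l1 l2 d)^[t] s)
  · obtain ⟨t, ht⟩ := hbl
    exact reaches_trans ⟨t, rfl⟩ (blocked_reach H _ ht)
  push_neg at hbl
  exfalso
  have hfree : ∀ t, ¬ blocked1 n l1 l2 d ((step n l1 l2 d)^[t] s) ∧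
      ¬ blocked2 n l1 l2 d ((step n l1 l2 d)^[t] s) := fun t => hbl t
  have hiter : ∀ t : ℕ, (step n l1 l2 d)^[t] s = (s.1 + (t : ZMod n), s.2 + (t : ZMod n)) := by
    intro t
    induction t with
    | zero => simp
    | succ k ih =>
      rw [Function.iterate_succ_apply', ih]
      have h1 := (hfree k).1
      have h2 := (hfree k).2
      rw [ih] at h1 h2
      rw [step_ff h1 h2]
      simp only [Prod.mk.injEq]
      constructor <;> push_cast <;> ring
  set a := s.1.val with hadef
  set b := s.2.val with hbdef
  set X := (s.2 - s.1).val with hXdef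
  have haa : ((a : ℕ) : ZMod n) = s.1 := ZMod.natCast_zmod_val s.1
  have hbb : ((b : ℕ) : ZMod n) = s.2 := ZMod.natCast_zmod_val s.2
  have hXX : ((X : ℕ) : ZMod n) = s.2 - s.1 := ZMod.natCast_zmod_val _
  have han : a < n := ZMod.val_lt s.1
  have hbn : b < n := ZMod.val_lt s.2
  have hXn : X < n := ZMod.val_lt _
  have Ea : ((n - a : ℕ) : ZMod n) = - s.1 := by
    rw [Nat.cast_sub han.le, ZMod.natCast_self, haa]; ring
  have Eb : ((n - b : ℕ) : ZMod n) = - s.2 := by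
    rw [Nat.cast_sub hbn.le, ZMod.natCast_self, hbb]; ring
  rcases (by omega : (d ≤ X ∧ X < d+l2) ∨ (X+d < l2) ∨ (n+1 ≤ X+d) ∨
      (1 ≤ X ∧ X+d ≤ n ∧ n < X+d+l1)) with hc | hc | hc | hc
  · -- cluster 1 gets blocked at node 1
    refine (hfree (n-a)).1 ?_
    rw [hiter (n-a), Ea]
    rw [show (s.1 + -s.1, s.2 + -s.1) = (((0:ℕ) : ZMod n), ((X:ℕ) : ZMod n)) by
      rw [hXX]; simp only [Prod.mk.injEq]; constructor <;> push_cast <;> ring]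
    rw [blocked1_iff H (by omega) hXn]
    omega
  · -- cluster 1 gets blocked at node 2
    refine (hfree ((n-a)+d)).1 ?_
    rw [hiter ((n-a)+d)]
    rw [show (s.1 + (((n-a)+d : ℕ) : ZMod n), s.2 + (((n-a)+d : ℕ) : ZMod n))
          = (((d:ℕ) : ZMod n), ((X+d : ℕ) : ZMod n)) by
      push_cast [Ea]
      simp only [Prod.mk.injEq]
      constructor
      · ring
      · rw [hXX]; ring]
    rw [blocked1_iff H (by omega) (by omega)]
    omega
  · -- cluster 1 gets blocked at node 2 (wrapped)
    refine (hfree ((n-a)+d)).1 ?_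
    rw [hiter ((n-a)+d)]
    have hw : ((X+d : ℕ) : ZMod n) = ((X+d-n : ℕ) : ZMod n) := by
      have e : ((X+d : ℕ) : ZMod n) = ((X+d-n : ℕ) : ZMod n) + ((n : ℕ) : ZMod n) := by
        rw [← Nat.cast_add]; congr 1; omega
      rw [e, ZMod.natCast_self, add_zero]
    rw [show (s.1 + (((n-a)+d : ℕ) : ZMod n), s.2 + (((n-a)+d : ℕ) : ZMod n))
          = (((d:ℕ) : ZMod n), ((X+d-n : ℕ) : ZMod n)) by
      rw [← hw]
      push_cast [Ea]
      simp only [Prod.mk.injEq]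
      constructor
      · ring
      · rw [hXX]; ring]
    rw [blocked1_iff H (by omega) (by omega)]
    omega
  · -- cluster 2 gets blocked at node 2
    refine (hfree (n-b)).2 ?_
    rw [hiter (n-b), Eb]
    have hY : ((n - X : ℕ) : ZMod n) = s.1 - s.2 := by
      rw [Nat.cast_sub hXn.le, ZMod.natCast_self, hXX]; ring
    rw [show (s.1 + -s.2, s.2 + -s.2) = (((n-X : ℕ) : ZMod n), ((0:ℕ) : ZMod n)) by
      rw [hY]; simp only [Prod.mk.injEq]; constructor <;> push_cast <;> ring]
    rw [blocked2_iff H (by omega) (by omega)]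
    omega

lemma moves1_succ (s : State n) (m : ℕ) :
    moves1 n l1 l2 d s (m+1) = moves1 n l1 l2 d s m
      + (if blocked1 n l1 l2 d ((step n l1 l2 d)^[m] s) then 0 else 1) := by
  rw [moves1, moves1, Finset.range_add_one, Finset.filter_insert]
  split_ifs with h
  · simp
  · have hm : m ∉ (Finset.range m).filter
        (fun t => ¬ blocked1 n l1 l2 d ((step n l1 l2 d)^[t] s)) := by
      intro hc
      exact absurd (Finset.mem_range.1 (Finset.mem_filter.1 hc).1) (lt_irrefl m)
    rw [Finset.card_insert_of_notMem hm]

lemma moves2_succ (s : State n) (m : ℕ) :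
    moves2 n l1 l2 d s (m+1) = moves2 n l1 l2 d s m
      + (if blocked2 n l1 l2 d ((step n l1 l2 d)^[m] s) then 0 else 1) := by
  rw [moves2, moves2, Finset.range_add_one, Finset.filter_insert]
  split_ifs with h
  · simp
  · have hm : m ∉ (Finset.range m).filter
        (fun t => ¬ blocked2 n l1 l2 d ((step n l1 l2 d)^[t] s)) := by
      intro hc
      exact absurd (Finset.mem_range.1 (Finset.mem_filter.1 hc).1) (lt_irrefl m)
    rw [Finset.card_insert_of_notMem hm]

lemma moves1_add (s : State n) (p q : ℕ) :
    moves1 n l1 l2 d s (p+q) = moves1 n l1 l2 d s p + moves1 n l1 l2 d ((step n l1 l2 d)^[p] s) q := by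
  induction q with
  | zero => simp [moves1]
  | succ k ih =>
    have e : (step n l1 l2 d)^[p+k] s = (step n l1 l2 d)^[k] ((step n l1 l2 d)^[p] s) := by
      rw [Nat.add_comm, Function.iterate_add_apply]
    rw [← Nat.add_assoc, moves1_succ, ih, moves1_succ, e, Nat.add_assoc]

lemma moves2_add (s : State n) (p q : ℕ) :
    moves2 n l1 l2 d s (p+q) = moves2 n l1 l2 d s p + moves2 n l1 l2 d ((step n l1 l2 d)^[p] s) q := by
  induction q with
  | zero => simp [moves2]
  | succ k ih =>
    have e : (step n l1 l2 d)^[p+k] s = (step n l1 l2 d)^[k] ((step n l1 l2 d)^[p] s) := by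
      rw [Nat.add_comm, Function.iterate_add_apply]
    rw [← Nat.add_assoc, moves2_succ, ih, moves2_succ, e, Nat.add_assoc]

lemma iter_mul {s : State n} (hs : (step n l1 l2 d)^[l1+l2+2*d] s = s) :
    ∀ k, (step n l1 l2 d)^[k*(l1+l2+2*d)] s = s := by
  intro k
  induction k with
  | zero => simp
  | succ k ih =>
    rw [Nat.succ_mul, Function.iterate_add_apply, hs, ih]

lemma moves1_c0 (H : Hyp n l1 l2 d) : moves1 n l1 l2 d (c0 n l1 d) (l1+l2+2*d) = n := by
  have hh := H; obtain ⟨hn, hd, h2d, hl1pos, hl1n, hl2pos, hl2n, h12, h1, h2, h3, h4⟩ := hh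
  rw [moves1]
  have hset : (Finset.range (l1+l2+2*d)).filter
      (fun t => ¬ blocked1 n l1 l2 d ((step n l1 l2 d)^[t] (c0 n l1 d)))
      = Finset.range (n-(l1+d)) ∪ Finset.Ico ((n-(l1+d))+(l1+l2+2*d-n)) (l1+l2+2*d) := by
    ext t
    simp only [Finset.mem_filter, Finset.mem_range, Finset.mem_union, Finset.mem_Ico]
    constructor
    · rintro ⟨ht, hnb⟩
      have hp := (pattern H t ht).1
      have : ¬ (n-(l1+d) ≤ t ∧ t < (n-(l1+d)) + (l1+l2+2*d-n)) := fun hw => hnb (hp.2 hw)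
      omega
    · intro h
      have ht : t < l1+l2+2*d := by omega
      refine ⟨ht, fun hb => ?_⟩
      have := (pattern H t ht).1.1 hb
      omega
  rw [hset, Finset.card_union_of_disjoint, Finset.card_range, Nat.card_Ico]
  · omega
  · rw [Finset.disjoint_left]
    intro x hx1 hx2
    rw [Finset.mem_range] at hx1
    rw [Finset.mem_Ico] at hx2
    omega

lemma moves2_c0 (H : Hyp n l1 l2 d) : moves2 n l1 l2 d (c0 n l1 d) (l1+l2+2*d) = n := by
  have hh := H; obtain ⟨hn, hd, h2d, hl1pos, hl1n, hl2pos, hl2n, h12, h1, h2, h3, h4⟩ := hh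
  rw [moves2]
  have hset : (Finset.range (l1+l2+2*d)).filter
      (fun t => ¬ blocked2 n l1 l2 d ((step n l1 l2 d)^[t] (c0 n l1 d)))
      = Finset.range ((n-(l1+d))+(l1+l2+2*d-n)+(n-(d+l2))) := by
    ext t
    simp only [Finset.mem_filter, Finset.mem_range]
    constructor
    · rintro ⟨ht, hnb⟩
      have hp := (pattern H t ht).2
      have : ¬ ((n-(l1+d)) + (l1+l2+2*d-n) + (n-(d+l2)) ≤ t) := fun hw => hnb (hp.2 hw)
      omega
    · intro h
      have ht : t < l1+l2+2*d := by omega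
      refine ⟨ht, fun hb => ?_⟩
      have := (pattern H t ht).2.1 hb
      omega
  rw [hset, Finset.card_range]
  omega

lemma moves1_T0_at (H : Hyp n l1 l2 d) (u : ℕ) :
    moves1 n l1 l2 d ((step n l1 l2 d)^[u] (c0 n l1 d)) (l1+l2+2*d) = n := by
  have h1 := moves1_add (n := n) (l1 := l1) (l2 := l2) (d := d) (c0 n l1 d) (l1+l2+2*d) u
  have h2 := moves1_add (n := n) (l1 := l1) (l2 := l2) (d := d) (c0 n l1 d) u (l1+l2+2*d)
  rw [cycle_T0 H, moves1_c0 H] at h1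
  rw [Nat.add_comm u (l1+l2+2*d)] at h2
  omega

lemma moves2_T0_at (H : Hyp n l1 l2 d) (u : ℕ) :
    moves2 n l1 l2 d ((step n l1 l2 d)^[u] (c0 n l1 d)) (l1+l2+2*d) = n := by
  have h1 := moves2_add (n := n) (l1 := l1) (l2 := l2) (d := d) (c0 n l1 d) (l1+l2+2*d) u
  have h2 := moves2_add (n := n) (l1 := l1) (l2 := l2) (d := d) (c0 n l1 d) u (l1+l2+2*d)
  rw [cycle_T0 H, moves2_c0 H] at h1
  rw [Nat.add_comm u (l1+l2+2*d)] at h2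
  omega

lemma onCycle (H : Hyp n l1 l2 d) (s : State n) (T : ℕ) (hT : 0 < T)
    (hTs : (step n l1 l2 d)^[T] s = s) : ∃ u, (step n l1 l2 d)^[u] (c0 n l1 d) = s := by
  obtain ⟨t, ht⟩ := reach_c0 H s
  have hk : ∀ k, (step n l1 l2 d)^[k*T] s = s := by
    intro k
    induction k with
    | zero => simp
    | succ k ih => rw [Nat.succ_mul, Function.iterate_add_apply, hTs, ih]
  have h1 : t ≤ t*T := Nat.le_mul_of_pos_right t hT
  refine ⟨t*T - t, ?_⟩
  rw [← ht, ← Function.iterate_add_apply, show t*T - t + t = t*T by omega]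
  exact hk t

lemma sT0 (H : Hyp n l1 l2 d) {s : State n} {u : ℕ} (hu : (step n l1 l2 d)^[u] (c0 n l1 d) = s) :
    (step n l1 l2 d)^[l1+l2+2*d] s = s := by
  rw [← hu, ← Function.iterate_add_apply, Nat.add_comm, Function.iterate_add_apply, cycle_T0 H]

lemma period_mult (H : Hyp n l1 l2 d) (s : State n) (T : ℕ) (hT : 0 < T)
    (hTs : (step n l1 l2 d)^[T] s = s) (u : ℕ) (hu : (step n l1 l2 d)^[u] (c0 n l1 d) = s) :
    ∃ q, T = q * (l1+l2+2*d) ∧ 0 < q := by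
  have hh := H; obtain ⟨hn, hd, h2d, hl1pos, hl1n, hl2pos, hl2n, h12, h1, h2, h3, h4⟩ := hh
  have hT0pos : 0 < l1+l2+2*d := by omega
  have hsT0 : (step n l1 l2 d)^[l1+l2+2*d] s = s := sT0 H hu
  have e : T % (l1+l2+2*d) + T / (l1+l2+2*d) * (l1+l2+2*d) = T := Nat.mod_add_div' T _
  have hr : (step n l1 l2 d)^[T % (l1+l2+2*d)] s = s := by
    have h' : (step n l1 l2 d)^[T % (l1+l2+2*d) + T / (l1+l2+2*d) * (l1+l2+2*d)] s = s := by
      rw [e]; exact hTs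
    rwa [Function.iterate_add_apply, iter_mul hsT0] at h'
  have hr0 : T % (l1+l2+2*d) = 0 := by
    by_contra hrne
    have eu : u % (l1+l2+2*d) + u / (l1+l2+2*d) * (l1+l2+2*d) = u := Nat.mod_add_div' u _
    have hu' : (step n l1 l2 d)^[u % (l1+l2+2*d)] (c0 n l1 d) = s := by
      have h'' : (step n l1 l2 d)^[u % (l1+l2+2*d) + u / (l1+l2+2*d) * (l1+l2+2*d)] (c0 n l1 d) = s := by
        rw [eu]; exact hu
      rwa [Function.iterate_add_apply, iter_mul (cycle_T0 H)] at h''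
    have humod : u % (l1+l2+2*d) < l1+l2+2*d := Nat.mod_lt _ hT0pos
    have hc : (step n l1 l2 d)^[(l1+l2+2*d) - u % (l1+l2+2*d)] s = c0 n l1 d := by
      rw [← hu', ← Function.iterate_add_apply,
        show (l1+l2+2*d) - u % (l1+l2+2*d) + u % (l1+l2+2*d) = l1+l2+2*d by omega]
      exact cycle_T0 H
    have hcyc : (step n l1 l2 d)^[T % (l1+l2+2*d)] (c0 n l1 d) = c0 n l1 d := by
      rw [← hc, ← Function.iterate_add_apply, Nat.add_comm, Function.iterate_add_apply, hr, hc]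
    exact min_per H (T % (l1+l2+2*d)) (by omega) (Nat.mod_lt _ hT0pos) hcyc
  refine ⟨T / (l1+l2+2*d), by omega, ?_⟩
  rcases Nat.eq_zero_or_pos (T / (l1+l2+2*d)) with h0 | h0
  · exfalso
    rw [h0, Nat.zero_mul] at e
    omega
  · exact h0

lemma moves_period (H : Hyp n l1 l2 d) (s : State n) (u T : ℕ)
    (hu : (step n l1 l2 d)^[u] (c0 n l1 d) = s) (hT : 0 < T)
    (hTs : (step n l1 l2 d)^[T] s = s) :
    moves1 n l1 l2 d s T * (l1+l2+2*d) = n * T ∧ moves2 n l1 l2 d s T * (l1+l2+2*d) = n * T := by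
  obtain ⟨q, hq, hqpos⟩ := period_mult H s T hT hTs u hu
  have hsT0 : (step n l1 l2 d)^[l1+l2+2*d] s = s := sT0 H hu
  have hm1T0 : moves1 n l1 l2 d s (l1+l2+2*d) = n := by rw [← hu]; exact moves1_T0_at H u
  have hm2T0 : moves2 n l1 l2 d s (l1+l2+2*d) = n := by rw [← hu]; exact moves2_T0_at H u
  have m1 : ∀ k, moves1 n l1 l2 d s (k*(l1+l2+2*d)) = k * n := by
    intro k
    induction k with
    | zero => simp [moves1]
    | succ k ih =>
      rw [Nat.succ_mul, moves1_add, iter_mul hsT0, ih, hm1T0, Nat.succ_mul]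
  have m2 : ∀ k, moves2 n l1 l2 d s (k*(l1+l2+2*d)) = k * n := by
    intro k
    induction k with
    | zero => simp [moves2]
    | succ k ih =>
      rw [Nat.succ_mul, moves2_add, iter_mul hsT0, ih, hm2T0, Nat.succ_mul]
  subst hq
  rw [m1 q, m2 q]
  constructor <;> ring

lemma adm_c0 (H : Hyp n l1 l2 d) : Admissible n l1 l2 d (c0 n l1 d) := by
  have hh := H; obtain ⟨hn, hd, h2d, hl1pos, hl1n, hl2pos, hl2n, h12, h1, h2, h3, h4⟩ := hh
  constructor
  · rintro ⟨h01, -, -, -⟩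
    simp only [c0] at h01
    rw [show (0 : ZMod n) = ((0:ℕ) : ZMod n) by norm_cast] at h01
    rw [occ_cast_iff hn (by omega) (by omega) (by omega)] at h01
    omega
  · rintro ⟨-, -, -, h1'⟩
    simp only [c0] at h1'
    rw [show (1 : ZMod n) = ((1:ℕ) : ZMod n) by norm_cast] at h1'
    rw [occ_cast_iff hn (by omega) (by omega) (by omega)] at h1'
    omega

theorem stmt9 (n l1 l2 d : ℕ) (hn : 0 < n) (hd : 0 < d) (h2d : 2 * d ≤ n)
    (hl1pos : 0 < l1) (hl1n : l1 < n) (hl2pos : 0 < l2) (hl2n : l2 < n) (h12 : l1 ≤ l2)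
    (h1 : l1 ≤ d) (h2 : 2 * d ≤ l2) (h3 : l2 ≤ n - 2 * d) (h4 : l1 + l2 > n - 2 * d) :
    (∃ s : State n, Admissible n l1 l2 d s ∧ Periodic n l1 l2 d s (l1 + l2 + 2 * d)) ∧
    (∀ s s' : State n, Admissible n l1 l2 d s → Admissible n l1 l2 d s' →
      (∃ T : ℕ, Periodic n l1 l2 d s T) → (∃ T' : ℕ, Periodic n l1 l2 d s' T') →
      ∃ t : ℕ, (step n l1 l2 d)^[t] s = s') ∧
    (∀ (s : State n) (T : ℕ), Admissible n l1 l2 d s → Periodic n l1 l2 d s T →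
      moves1 n l1 l2 d s T * (l1 + l2 + 2 * d) = n * T ∧
      moves2 n l1 l2 d s T * (l1 + l2 + 2 * d) = n * T) := by
  have H : Hyp n l1 l2 d := ⟨hn, hd, h2d, hl1pos, hl1n, hl2pos, hl2n, h12, h1, h2, h3, h4⟩
  refine ⟨⟨c0 n l1 d, adm_c0 H, ⟨by omega, cycle_T0 H⟩⟩, ?_, ?_⟩
  · rintro s s' - - ⟨T, hT0, hTs⟩ ⟨T', hT'0, hT's⟩
    obtain ⟨t1, ht1⟩ := reach_c0 H s
    obtain ⟨u, hu⟩ := onCycle H s' T' hT'0 hT's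
    exact ⟨u + t1, by rw [Function.iterate_add_apply, ht1, hu]⟩
  · rintro s T - ⟨hTpos, hTs⟩
    obtain ⟨u, hu⟩ := onCycle H s T hTpos hTs
    exact moves_period H s u T hu hTpos hTs

end TwoContour
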